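/- For all impartial games G and H, the variation set of the ordinal sum satisfies 𝒱(G : H) = 𝒱(G) : 𝒱(H), where on the right-hand side : denotes the colon operation on finite subsets of ℕ. -/

import Mathlib

/-- mex (minimum excludant) of a set of naturals. -/
noncomputable def mexS (A : Set ℕ) : ℕ := sInf {n | n ∉ A}

/-- The colon operation on sets of naturals:
`A : B = A ∪ {x_i | i ∈ B}` where `x_0 < x_1 < ⋯` enumerates `ℕ \ A`. -/
noncomputable def colonS (A B : Set ℕ) : Set ℕ :=
  A ∪ (fun i => Nat.nth (fun n => n ∉ A) i) '' B

/-- Elementwise addition of a natural number: `A + b = {a + b | a ∈ A}`. -/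
def addS (A : Set ℕ) (b : ℕ) : Set ℕ := (· + b) '' A

/-- Elementwise bitwise XOR: `A ⊕ x = {a XOR x | a ∈ A}`. -/
def xorS (A : Set ℕ) (x : ℕ) : Set ℕ := (fun a => a ^^^ x) '' A

/-- `Gn n` is the set of (hereditarily finite) games born by day `n`:
`Gn 0 = {∅}`, `Gn (n+1) = 2^(Gn n)`. -/
noncomputable def Gn : ℕ → ZFSet
  | 0 => {∅}
  | n + 1 => ZFSet.powerset (Gn n)

/-- An impartial game: a hereditarily finite set. -/
def IsGame (G : ZFSet) : Prop := ∃ n, G ∈ Gn n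

/-- Birthday: least `n` with `G ∈ Gn n`. -/
noncomputable def birthday (G : ZFSet) : ℕ := sInf {n | G ∈ Gn n}

/-- `g` is the Grundy-number function: `g G = mex {g G' | G' ∈ G}`. -/
def IsGrundy (g : ZFSet → ℕ) : Prop :=
  ∀ G : ZFSet, g G = mexS {n | ∃ x ∈ G, g x = n}

/-- The variation set of `G` with respect to a Grundy function `g`:
the set of Grundy values of the options of `G`. -/
def vset (g : ZFSet → ℕ) (G : ZFSet) : Set ℕ := {n | ∃ x ∈ G, g x = n}

/-- `f` is the ordinal sum with substitution: `f G H Ĥ = G :_{Ĥ} H`,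
defined by `G :_{Ĥ} H = {G' :_{Ĥ} Ĥ | G' ∈ G} ∪ {G :_{Ĥ} H' | H' ∈ H}`. -/
def IsOSub (f : ZFSet → ZFSet → ZFSet → ZFSet) : Prop :=
  ∀ G H Hh x : ZFSet,
    x ∈ f G H Hh ↔ (∃ G' ∈ G, x = f G' Hh Hh) ∨ (∃ H' ∈ H, x = f G H' Hh)

/-- `s` is the ordinal sum: `G : H = {G' | G' ∈ G} ∪ {G : H' | H' ∈ H}`. -/
def IsOSum (s : ZFSet → ZFSet → ZFSet) : Prop :=
  ∀ G H x : ZFSet, x ∈ s G H ↔ x ∈ G ∨ (∃ H' ∈ H, x = s G H')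

/-- `d` is the disjunctive sum: `G + H = {G' + H | G' ∈ G} ∪ {G + H' | H' ∈ H}`. -/
def IsDSum (d : ZFSet → ZFSet → ZFSet) : Prop :=
  ∀ G H x : ZFSet, x ∈ d G H ↔ (∃ G' ∈ G, x = d G' H) ∨ (∃ H' ∈ H, x = d G H')

/-- The nimber `*n = {*m | m < n}`. -/
noncomputable def nim : ℕ → ZFSet
  | 0 => ∅
  | n + 1 => insert (nim n) (nim n)

/-- Left-associated chain of ordinal sums with substitution:
`chain f X Xh s k = X s :_{Xh (s+1)} X (s+1) :_{Xh (s+2)} ⋯ :_{Xh (s+k)} X (s+k)`. -/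
noncomputable def chain (f : ZFSet → ZFSet → ZFSet → ZFSet)
    (X Xh : ℕ → ZFSet) (s : ℕ) : ℕ → ZFSet
  | 0 => X s
  | k + 1 => f (chain f X Xh s k) (X (s + k + 1)) (Xh (s + k + 1))
open Classical in
/-- Key arithmetic lemma: `mex (A : B) = x_{mex B}`. -/
lemma mex_colon (A B : Set ℕ) (hA : A.Finite) (hB : B.Finite) :
    mexS (colonS A B) = Nat.nth (fun n => n ∉ A) (mexS B) := by
  set p : ℕ → Prop := fun n => n ∉ A with hp_def
  have hp : (setOf p).Infinite := hA.infinite_compl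
  set m := mexS B with hm_def
  have hne : {n | n ∉ B}.Nonempty := hB.infinite_compl.nonempty
  have hm : m ∉ B := Nat.sInf_mem hne
  have hlt : ∀ k < m, k ∈ B := by
    intro k hk
    by_contra hkB
    exact absurd hkB (Nat.notMem_of_lt_sInf hk)
  have hmem : Nat.nth p m ∈ {n | n ∉ colonS A B} := by
    intro hcontra
    rcases hcontra with h1 | ⟨b, hb, heq⟩
    · exact (Nat.nth_mem_of_infinite hp m) h1
    · exact hm (Nat.nth_injective hp heq ▸ hb)
  have hmin : ∀ k ∈ {n | n ∉ colonS A B}, Nat.nth p m ≤ k := by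
    intro k hk
    by_contra hklt
    push_neg at hklt
    have hkA : p k := fun h => hk (Or.inl h)
    have hkn : Nat.nth p (Nat.count p k) = k := Nat.nth_count hkA
    have hj : Nat.count p k < m := by
      rw [← Nat.nth_lt_nth hp, hkn]; exact hklt
    exact hk (Or.inr ⟨Nat.count p k, hlt _ hj, hkn⟩)
  exact le_antisymm (Nat.sInf_le hmem) (le_csInf ⟨_, hmem⟩ hmin)

lemma vset_osum_eq {s : ZFSet → ZFSet → ZFSet} (hs : IsOSum s) {g : ZFSet → ℕ}
    (G H : ZFSet)
    (hstep : ∀ H' ∈ H, g (s G H') = Nat.nth (fun n => n ∉ vset g G) (g H')) :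
    vset g (s G H) = colonS (vset g G) (vset g H) := by
  ext n
  constructor
  · rintro ⟨x, hx, rfl⟩
    rcases (hs G H x).mp hx with h | ⟨H', hH', rfl⟩
    · exact Or.inl ⟨x, h, rfl⟩
    · exact Or.inr ⟨g H', ⟨H', hH', rfl⟩, (hstep H' hH').symm⟩
  · rintro (⟨x, hx, rfl⟩ | ⟨b, ⟨H', hH', rfl⟩, rfl⟩)
    · exact ⟨x, (hs G H x).mpr (Or.inl hx), rfl⟩
    · exact ⟨s G H', (hs G H (s G H')).mpr (Or.inr ⟨H', hH', rfl⟩), (hstep H' hH')⟩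

theorem ZFSet.mem_toSet (a u : ZFSet) : a ∈ u.toSet ↔ a ∈ u := Iff.rfl

theorem ZFSet.toSet_injective : Function.Injective ZFSet.toSet := SetLike.coe_injective

lemma Gn_toSet_finite : ∀ n, (Gn n).toSet.Finite := by
  intro n
  induction n with
  | zero =>
    have : (Gn 0).toSet = {∅} := by
      ext x; simp [Gn, ZFSet.mem_toSet]
    rw [this]; exact Set.finite_singleton _
  | succ n ih =>
    have hsub : ZFSet.toSet '' (Gn (n + 1)).toSet ⊆ {t | t ⊆ (Gn n).toSet} := by
      rintro _ ⟨y, hy, rfl⟩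
      have : y ⊆ Gn n := ZFSet.mem_powerset.mp (by simpa [ZFSet.mem_toSet, Gn] using hy)
      intro a ha
      exact ZFSet.mem_toSet _ _ |>.mpr (this (ZFSet.mem_toSet _ _ |>.mp ha))
    have himg : (ZFSet.toSet '' (Gn (n + 1)).toSet).Finite :=
      Set.Finite.subset ih.finite_subsets hsub
    exact Set.Finite.of_finite_image himg (ZFSet.toSet_injective.injOn)

lemma IsGame.subset_Gn {G : ZFSet} (hG : IsGame G) : ∃ n, G ⊆ Gn n := by
  obtain ⟨n, hn⟩ := hG
  cases n with
  | zero =>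
    have : G = ∅ := by simpa [Gn] using hn
    exact ⟨0, by simp [this]⟩
  | succ n => exact ⟨n, ZFSet.mem_powerset.mp hn⟩

lemma IsGame.mem {G x : ZFSet} (hG : IsGame G) (hx : x ∈ G) : IsGame x := by
  obtain ⟨n, hn⟩ := hG.subset_Gn
  exact ⟨n, hn hx⟩

lemma IsGame.vset_finite {G : ZFSet} (hG : IsGame G) (g : ZFSet → ℕ) :
    (vset g G).Finite := by
  obtain ⟨n, hn⟩ := hG.subset_Gn
  have h1 : G.toSet.Finite := (Gn_toSet_finite n).subset (fun a ha =>
    ZFSet.mem_toSet _ _ |>.mpr (hn (ZFSet.mem_toSet _ _ |>.mp ha)))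
  have : vset g G = g '' G.toSet := by
    ext k
    simp [vset, Set.mem_image, ZFSet.mem_toSet]
  rw [this]
  exact h1.image g

lemma grundy_osum {s : ZFSet → ZFSet → ZFSet} (hs : IsOSum s) {g : ZFSet → ℕ}
    (hg : IsGrundy g) :
    ∀ H : ZFSet, IsGame H → ∀ G : ZFSet, IsGame G →
      g (s G H) = Nat.nth (fun n => n ∉ vset g G) (g H) := by
  intro H
  induction H using ZFSet.inductionOn with
  | _ H ih =>
    intro hH G hG
    have hstep : ∀ H' ∈ H, g (s G H') = Nat.nth (fun n => n ∉ vset g G) (g H') :=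
      fun H' hH' => ih H' hH' (hH.mem hH') G hG
    have h1 : g (s G H) = mexS (vset g (s G H)) := hg (s G H)
    rw [h1, vset_osum_eq hs G H hstep,
      mex_colon _ _ (hG.vset_finite g) (hH.vset_finite g)]
    congr 1
    exact (hg H).symm

theorem stmt17 (s : ZFSet → ZFSet → ZFSet) (hs : IsOSum s)
    (g : ZFSet → ℕ) (hg : IsGrundy g)
    (G H : ZFSet) (hG : IsGame G) (hH : IsGame H) :
    vset g (s G H) = colonS (vset g G) (vset g H) :=
  vset_osum_eq hs G H (fun H' hH' => grundy_osum hs hg H' (hH.mem hH') G hG)
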